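/- arXiv:2010.04594 — 10 statements merged into one kernel-verified Lean document; each statement's English description precedes it below -/
import Mathlib

section
/- Let (xₙ) be a sequence in a Banach lattice X, and let (yₙ) and (zₙ) be decreasing sequences in X which are bounded below, such that ‖xₙ − yₙ‖ → 0 and ‖xₙ − zₙ‖ → 0. Assume there is a point-separating family M of positive linear functionals on X that are continuous from above (μxₙ ↓ 0 whenever xₙ ↓ 0) and extend to the set X_δ of infima of decreasing X-sequences in an ambient Dedekind σ-complete Riesz space. Then inf_n yₙ = inf_n zₙ (in the ambient space). -/
/-!
Let `μ ∈ M` separate `a` and `b`. The functional `μ ∘ e` is positive on the Banach lattice `X`,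
hence norm-continuous: otherwise one finds `uₙ ≥ 0` of norm `≤ 1` with `μ (e uₙ) > n 2ⁿ`, and the
positive element `s = ∑ 2⁻ⁿ uₙ` would satisfy `μ (e s) > n` for every `n`. Since
`‖yₙ - zₙ‖ ≤ ‖xₙ - yₙ‖ + ‖xₙ - zₙ‖ → 0`, continuity gives `μ (e yₙ) - μ (e zₙ) → 0`, whereas
continuity from above gives `μ (e yₙ) - μ (e zₙ) → μ a - μ b ≠ 0`.
-/

open Filter Topology

namespace LinearMap

lemma abs_apply_le_apply_abs_of_monotone {X : Type*} [AddCommGroup X] [Lattice X] [Module ℝ X]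
    {f : X →ₗ[ℝ] ℝ} (hf : Monotone f) (v : X) : |f v| ≤ f |v| :=
  abs_le.2 ⟨by simpa using neg_le_neg (hf (neg_le_abs v)), hf (le_abs_self v)⟩

variable {X : Type*} [NormedAddCommGroup X] [Lattice X] [HasSolidNorm X] [IsOrderedAddMonoid X]
  [NormedSpace ℝ X] [PosSMulMono ℝ X] {f : X →ₗ[ℝ] ℝ}

lemma exists_forall_nonneg_norm_le_one_apply_le_of_monotone [CompleteSpace X] (hf : Monotone f) :
    ∃ C, ∀ u : X, 0 ≤ u → ‖u‖ ≤ 1 → f u ≤ C := by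
  by_contra! h
  choose u hu_nonneg hu_norm hfu using fun n : ℕ => h (2 ^ n * n)
  set w : ℕ → X := fun n => ((2 : ℝ) ^ n)⁻¹ • u n
  have hw_nonneg (n : ℕ) : 0 ≤ w n := smul_nonneg (by positivity) (hu_nonneg n)
  have hw_summable : Summable w := by
    refine Summable.of_norm_bounded summable_geometric_two fun n => ?_
    calc ‖w n‖ = ((2 : ℝ) ^ n)⁻¹ * ‖u n‖ := by
          rw [norm_smul, Real.norm_of_nonneg (by positivity)]
      _ ≤ (1 / 2) ^ n := by
          rw [one_div, inv_pow]
          exact mul_le_of_le_one_right (by positivity) (hu_norm n)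
  have hfw (n : ℕ) : (n : ℝ) < f (w n) := by
    calc (n : ℝ) = ((2 : ℝ) ^ n)⁻¹ * (2 ^ n * n) := by field_simp
      _ < ((2 : ℝ) ^ n)⁻¹ * f (u n) := mul_lt_mul_of_pos_left (hfu n) (by positivity)
      _ = f (w n) := by simp [w]
  obtain ⟨n, hn⟩ := exists_nat_gt (f (∑' n, w n))
  exact (hfw n).not_ge ((hf (hw_summable.le_tsum n fun j _ => hw_nonneg j)).trans hn.le)

lemma continuous_of_monotone [CompleteSpace X] (hf : Monotone f) : Continuous f := by
  obtain ⟨C, hC⟩ := exists_forall_nonneg_norm_le_one_apply_le_of_monotone hf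
  refine AddMonoidHomClass.continuous_of_bound f (C / 1)
    fun v => f.bound_of_ball_bound' one_pos C (fun z hz => ?_) v
  rw [mem_closedBall_zero_iff] at hz
  calc ‖f z‖ = |f z| := Real.norm_eq_abs _
    _ ≤ f |z| := abs_apply_le_apply_abs_of_monotone hf z
    _ ≤ C := hC |z| (abs_nonneg z) ((norm_abs_eq_norm z).trans_le hz)

end LinearMap

theorem stmt5_general {X Xbar : Type*} [NormedAddCommGroup X] [Lattice X] [HasSolidNorm X]
    [IsOrderedAddMonoid X] [NormedSpace ℝ X] [PosSMulStrictMono ℝ X]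
    [CompleteSpace X] [AddCommGroup Xbar] [Lattice Xbar] [Module ℝ Xbar]
    (e : X →ₗ[ℝ] Xbar) (he : Monotone e)
    (M : Set (Xbar →ₗ[ℝ] ℝ))
    (hMpos : ∀ μ ∈ M, Monotone μ)
    (hMcont : ∀ μ ∈ M, ∀ (w : ℕ → X) (c : Xbar), Antitone w →
      IsGLB (Set.range fun n => e (w n)) c →
      Filter.Tendsto (fun n => μ (e (w n))) Filter.atTop (nhds (μ c)))
    (hMsep : ∀ c d : Xbar,
      c ∈ {v : Xbar | ∃ w : ℕ → X, Antitone w ∧ IsGLB (Set.range fun n => e (w n)) v} →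
      d ∈ {v : Xbar | ∃ w : ℕ → X, Antitone w ∧ IsGLB (Set.range fun n => e (w n)) v} →
      c ≠ d → ∃ μ ∈ M, μ c ≠ μ d)
    (x y z : ℕ → X) (hy : Antitone y) (hz : Antitone z)
    (hxy : Filter.Tendsto (fun n => ‖x n - y n‖) Filter.atTop (nhds 0))
    (hxz : Filter.Tendsto (fun n => ‖x n - z n‖) Filter.atTop (nhds 0))
    (a b : Xbar)
    (ha : IsGLB (Set.range fun n => e (y n)) a)
    (hb : IsGLB (Set.range fun n => e (z n)) b) :
    a = b := by
  by_contra hne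
  obtain ⟨μ, hμM, hμne⟩ := hMsep a b ⟨y, hy, ha⟩ ⟨z, hz, hb⟩ hne
  have hcont : Continuous (μ ∘ₗ e) := LinearMap.continuous_of_monotone ((hMpos μ hμM).comp he)
  have hyz : Tendsto (fun n => y n - z n) atTop (𝓝 0) := by
    simpa only [sub_sub_sub_cancel_left, sub_zero] using
      (tendsto_zero_iff_norm_tendsto_zero.2 hxz).sub (tendsto_zero_iff_norm_tendsto_zero.2 hxy)
  have hlim_zero : Tendsto (fun n => μ (e (y n)) - μ (e (z n))) atTop (𝓝 0) := by
    simpa [Function.comp_def] using (hcont.tendsto 0).comp hyz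
  have hlim_ab := (hMcont μ hμM y a hy ha).sub (hMcont μ hμM z b hz hb)
  exact hμne (sub_eq_zero.1 (tendsto_nhds_unique hlim_ab hlim_zero))

/-- If `(yₙ)` and `(zₙ)` are decreasing sequences in a Banach lattice `X`, bounded below, and
both norm-asymptotic to a sequence `(xₙ)`, then their infima in the ambient Dedekind
σ-complete Riesz space `Xbar` coincide, provided there is a point-separating family `M` of
positive linear functionals continuous from above on the set `X_δ` of infima of decreasing
`X`-sequences. -/
theorem stmt5 {X Xbar : Type*} [NormedAddCommGroup X] [Lattice X] [HasSolidNorm X]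
    [IsOrderedAddMonoid X] [NormedSpace ℝ X] [PosSMulStrictMono ℝ X] [PosSMulReflectLT ℝ X]
    [CompleteSpace X] [AddCommGroup Xbar] [Lattice Xbar] [Module ℝ Xbar]
    [CovariantClass Xbar Xbar (· + ·) (· ≤ ·)]
    (e : X →ₗ[ℝ] Xbar) (he : Monotone e)
    (M : Set (Xbar →ₗ[ℝ] ℝ))
    (hMpos : ∀ μ ∈ M, Monotone μ)
    (hMcont : ∀ μ ∈ M, ∀ (w : ℕ → X) (c : Xbar), Antitone w →
      IsGLB (Set.range fun n => e (w n)) c →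
      Filter.Tendsto (fun n => μ (e (w n))) Filter.atTop (nhds (μ c)))
    (hMsep : ∀ c d : Xbar,
      c ∈ {v : Xbar | ∃ w : ℕ → X, Antitone w ∧ IsGLB (Set.range fun n => e (w n)) v} →
      d ∈ {v : Xbar | ∃ w : ℕ → X, Antitone w ∧ IsGLB (Set.range fun n => e (w n)) v} →
      c ≠ d → ∃ μ ∈ M, μ c ≠ μ d)
    (x y z : ℕ → X) (hy : Antitone y) (hz : Antitone z)
    (hybd : BddBelow (Set.range y)) (hzbd : BddBelow (Set.range z))
    (hxy : Filter.Tendsto (fun n => ‖x n - y n‖) Filter.atTop (nhds 0))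
    (hxz : Filter.Tendsto (fun n => ‖x n - z n‖) Filter.atTop (nhds 0))
    (a b : Xbar)
    (ha : IsGLB (Set.range fun n => e (y n)) a)
    (hb : IsGLB (Set.range fun n => e (z n)) b) :
    a = b :=
  stmt5_general e he M hMpos hMcont hMsep x y z hy hz hxy hxz a b ha hb
end

section
/- For the uncertain shift semigroup on BUC(ℝ), defined by (S(t)f)(x) := sup_{|y|≤t} f(x+y), the family (S(t))_{t≥0} satisfies the semigroup law S(s+t)f = S(t)(S(s)f) for all s, t ≥ 0 and all bounded uniformly continuous f : ℝ → ℝ. -/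
/-!
Every `y` with `|y| ≤ s + t` splits as `y = w + v` with `|w| ≤ t` and `|v| ≤ s`, and conversely
such sums stay in `[-(s + t), s + t]`; so the supremum over `|y| ≤ s + t` is the iterated supremum
over `|w| ≤ t` and then `|v| ≤ s`. Boundedness of `f` keeps all these suprema finite.
-/

/-- The uncertain shift semigroup on `BUC(ℝ)`: `(S t f) x = sup_{|y| ≤ t} f (x + y)`. -/
noncomputable def US (t : ℝ) (f : ℝ → ℝ) (x : ℝ) : ℝ :=
  sSup {z : ℝ | ∃ y : ℝ, |y| ≤ t ∧ z = f (x + y)}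

section

variable {f : ℝ → ℝ} {s t x y : ℝ}

lemma le_US (hf : BddAbove (Set.range f)) (hy : |y| ≤ t) : f (x + y) ≤ US t f x := by
  obtain ⟨C, hC⟩ := hf
  refine le_csSup ⟨C, ?_⟩ ⟨y, hy, rfl⟩
  rintro _ ⟨y, -, rfl⟩
  exact hC ⟨_, rfl⟩

lemma US_le {M : ℝ} (ht : 0 ≤ t) (h : ∀ y, |y| ≤ t → f (x + y) ≤ M) : US t f x ≤ M :=
  csSup_le ⟨f (x + 0), 0, by simpa using ht, rfl⟩ fun _ ⟨y, hy, hz⟩ => hz ▸ h y hy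

lemma bddAbove_range_US (hf : BddAbove (Set.range f)) (ht : 0 ≤ t) :
    BddAbove (Set.range (US t f)) := by
  obtain ⟨C, hC⟩ := hf
  exact ⟨C, Set.forall_mem_range.2 fun x => US_le ht fun y _ => hC ⟨_, rfl⟩⟩

lemma exists_abs_le_abs_sub_le (hs : 0 ≤ s) (ht : 0 ≤ t) (hy : |y| ≤ s + t) :
    ∃ w, |w| ≤ t ∧ |y - w| ≤ s := by
  have hy' : y ∈ Metric.closedBall (0 : ℝ) (s + t) := by simpa using hy
  rw [← zero_add (0 : ℝ), ← closedBall_add_closedBall hs ht] at hy'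
  obtain ⟨v, hv, w, hw, rfl⟩ := hy'
  exact ⟨w, by simpa using hw, by simpa using hv⟩

end

theorem stmt6_general (f : ℝ → ℝ) (C : ℝ) (hb : ∀ x, |f x| ≤ C)
    (s t : ℝ) (hs : 0 ≤ s) (ht : 0 ≤ t) (x : ℝ) :
    US (s + t) f x = US t (US s f) x := by
  have hf : BddAbove (Set.range f) := ⟨C, Set.forall_mem_range.2 fun x => le_of_abs_le (hb x)⟩
  apply le_antisymm
  · refine US_le (add_nonneg hs ht) fun y hy => ?_
    obtain ⟨w, hw, hyw⟩ := exists_abs_le_abs_sub_le hs ht hy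
    calc f (x + y) = f (x + w + (y - w)) := by ring_nf
      _ ≤ US s f (x + w) := le_US hf hyw
      _ ≤ US t (US s f) x := le_US (bddAbove_range_US hf hs) hw
  · refine US_le ht fun w hw => US_le hs fun v hv => ?_
    rw [add_assoc]
    exact le_US hf ((abs_add_le w v).trans (by linarith))

/-- The uncertain shift semigroup satisfies the semigroup law `S(s+t)f = S(t)(S(s)f)` on
bounded uniformly continuous functions. -/
theorem stmt6 (f : ℝ → ℝ) (C : ℝ) (hb : ∀ x, |f x| ≤ C) (hu : UniformContinuous f)
    (s t : ℝ) (hs : 0 ≤ s) (ht : 0 ≤ t) (x : ℝ) :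
    US (s + t) f x = US t (US s f) x :=
  stmt6_general f C hb s t hs ht x
end

section
/- The operator B f := |f'| with domain D(B) = BUC¹(ℝ) (bounded uniformly continuous f with bounded uniformly continuous derivative), viewed in BUC(ℝ), is accretive: for all f₁, f₂ ∈ BUC¹(ℝ) and h > 0, ‖f₁ − f₂ + h(|f₁'| − |f₂'|)‖_∞ ≥ ‖f₁ − f₂‖_∞. -/
/-!
Write `g = f₁ - f₂`. Since `|f₁'| - |f₂'| ≥ -|g'|`, it suffices to show that a bounded
differentiable `g` with `g - h|g'| ≤ C` satisfies `g ≤ C` (and the same for `f₂ - f₁`). This holds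
because `g` has almost-maximal points with almost-vanishing derivative: if `g x₀ > sup g - ε`,
a maximizer `y` of the penalized function `g x - (ε/4)(x - x₀)²` satisfies `g y ≥ g x₀` and
`g' y = (ε/2)(y - x₀)`, while `(ε/4)(y - x₀)² ≤ g y - g x₀ < ε` forces `|g' y| < ε`.
-/

open Filter Set

theorem Continuous.exists_forall_sub_mul_sq_le {g : ℝ → ℝ} (hg : Continuous g)
    (hbdd : BddAbove (range g)) {α : ℝ} (hα : 0 < α) (x₀ : ℝ) :
    ∃ y, ∀ x, g x - α * (x - x₀) ^ 2 ≤ g y - α * (y - x₀) ^ 2 := by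
  obtain ⟨S, hS⟩ := hbdd
  refine (hg.sub (by fun_prop)).exists_forall_ge ?_
  have hsq : Tendsto (fun x => α * (x - x₀) ^ 2) (cocompact ℝ) atTop := by
    refine Tendsto.const_mul_atTop hα ?_
    have h := (tendsto_pow_atTop two_ne_zero).comp (tendsto_dist_right_cocompact_atTop x₀)
    simpa only [Function.comp_def, Real.dist_eq, sq_abs] using h
  refine tendsto_atBot_mono (fun x => ?_)
    (tendsto_atBot_add_const_left _ S (tendsto_neg_atTop_atBot.comp hsq))
  simpa [sub_eq_add_neg] using hS (mem_range_self x)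

theorem exists_ciSup_sub_lt_and_abs_deriv_lt {g : ℝ → ℝ} (hg : Differentiable ℝ g)
    (hbdd : BddAbove (range g)) {ε : ℝ} (hε : 0 < ε) :
    ∃ y, (⨆ x, g x) - ε < g y ∧ |deriv g y| < ε := by
  obtain ⟨x₀, hx₀⟩ := exists_lt_of_lt_ciSup (sub_lt_self (⨆ x, g x) hε)
  obtain ⟨y, hy⟩ := hg.continuous.exists_forall_sub_mul_sq_le hbdd (by positivity : 0 < ε / 4) x₀
  have hderiv : deriv g y = ε / 2 * (y - x₀) := by
    have hmax : IsLocalMax (fun x => g x - ε / 4 * (x - x₀) ^ 2) y :=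
      Eventually.of_forall hy
    have hpen : HasDerivAt (fun x => ε / 4 * (x - x₀) ^ 2) (ε / 2 * (y - x₀)) y :=
      (((hasDerivAt_id' y).sub_const x₀).fun_pow 2).const_mul (ε / 4) |>.congr_deriv (by ring)
    linarith [hmax.hasDerivAt_eq_zero ((hg y).hasDerivAt.sub hpen)]
  have hle : g x₀ ≤ g y := by nlinarith [hy x₀]
  have hsq : ε / 4 * (y - x₀) ^ 2 < ε := by
    nlinarith [hy x₀, le_ciSup hbdd y]
  refine ⟨y, hx₀.trans_le hle, ?_⟩
  rw [hderiv, abs_mul, abs_of_pos (by positivity : 0 < ε / 2)]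
  nlinarith [sq_abs (y - x₀), abs_nonneg (y - x₀)]

theorem le_of_forall_sub_mul_abs_deriv_le {g : ℝ → ℝ} (hg : Differentiable ℝ g)
    (hbdd : BddAbove (range g)) {h C : ℝ} (hh : 0 ≤ h)
    (hC : ∀ x, g x - h * |deriv g x| ≤ C) (x : ℝ) : g x ≤ C := by
  refine le_of_forall_pos_lt_add fun ε hε => ?_
  obtain ⟨y, hy, hy'⟩ := exists_ciSup_sub_lt_and_abs_deriv_lt hg hbdd
    (by positivity : 0 < ε / (h + 1))
  have hslope : h * |deriv g y| ≤ h * (ε / (h + 1)) :=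
    mul_le_mul_of_nonneg_left hy'.le hh
  have hε' : h * (ε / (h + 1)) + ε / (h + 1) = ε := by field_simp
  linarith [le_ciSup hbdd x, hC y]

theorem sub_le_of_forall_add_mul_abs_deriv_sub_le {f₁ f₂ : ℝ → ℝ} (hd₁ : Differentiable ℝ f₁)
    (hd₂ : Differentiable ℝ f₂) (hbdd : BddAbove (range (f₁ - f₂))) {h C : ℝ} (hh : 0 ≤ h)
    (hC : ∀ x, f₁ x - f₂ x + h * (|deriv f₁ x| - |deriv f₂ x|) ≤ C) (x : ℝ) :
    f₁ x - f₂ x ≤ C := by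
  refine le_of_forall_sub_mul_abs_deriv_le (hd₁.sub hd₂) hbdd hh (fun y => ?_) x
  have hderiv : deriv (f₁ - f₂) y = deriv f₁ y - deriv f₂ y := deriv_sub (hd₁ y) (hd₂ y)
  have hrev : h * (|deriv f₂ y| - |deriv f₁ y|) ≤ h * |deriv f₁ y - deriv f₂ y| :=
    mul_le_mul_of_nonneg_left ((abs_sub_abs_le_abs_sub _ _).trans_eq (abs_sub_comm _ _)) hh
  rw [hderiv, Pi.sub_apply]
  linarith [hC y]

theorem stmt10_general (f₁ f₂ : ℝ → ℝ)
    (hb₁ : ∃ C, ∀ x, |f₁ x| ≤ C)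
    (hd₁ : Differentiable ℝ f₁)
    (hb₂ : ∃ C, ∀ x, |f₂ x| ≤ C)
    (hd₂ : Differentiable ℝ f₂)
    (h : ℝ) (hh : 0 < h) (C : ℝ)
    (hC : ∀ x, |f₁ x - f₂ x + h * (|deriv f₁ x| - |deriv f₂ x|)| ≤ C) :
    ∀ x, |f₁ x - f₂ x| ≤ C := by
  obtain ⟨C₁, hC₁⟩ := hb₁
  obtain ⟨C₂, hC₂⟩ := hb₂
  have hbdd : ∀ x, |f₁ x - f₂ x| ≤ C₁ + C₂ :=
    fun x => (abs_sub _ _).trans (add_le_add (hC₁ x) (hC₂ x))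
  have hbdd₁₂ : BddAbove (range (f₁ - f₂)) :=
    ⟨C₁ + C₂, forall_mem_range.2 fun x => (le_abs_self _).trans (hbdd x)⟩
  have hbdd₂₁ : BddAbove (range (f₂ - f₁)) :=
    ⟨C₁ + C₂, forall_mem_range.2 fun x =>
      (le_abs_self _).trans ((abs_sub_comm _ _).trans_le (hbdd x))⟩
  intro x
  refine abs_le.2 ⟨?_, ?_⟩
  · have := sub_le_of_forall_add_mul_abs_deriv_sub_le hd₂ hd₁ hbdd₂₁ hh.le (C := C)
      (fun y => by linarith [(abs_le.1 (hC y)).1]) x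
    linarith
  · exact sub_le_of_forall_add_mul_abs_deriv_sub_le hd₁ hd₂ hbdd₁₂ hh.le
      (fun y => (abs_le.1 (hC y)).2) x

/-- The operator `B f = |f'|` with domain `BUC¹(ℝ)` is accretive: for `f₁, f₂ ∈ BUC¹(ℝ)` and
`h > 0`, `‖f₁ - f₂ + h(|f₁'| - |f₂'|)‖_∞ ≥ ‖f₁ - f₂‖_∞` (stated via arbitrary sup-norm
bounds `C`). -/
theorem stmt10 (f₁ f₂ : ℝ → ℝ)
    (hb₁ : ∃ C, ∀ x, |f₁ x| ≤ C) (hu₁ : UniformContinuous f₁)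
    (hd₁ : Differentiable ℝ f₁)
    (hb₁' : ∃ C, ∀ x, |deriv f₁ x| ≤ C) (hu₁' : UniformContinuous (deriv f₁))
    (hb₂ : ∃ C, ∀ x, |f₂ x| ≤ C) (hu₂ : UniformContinuous f₂)
    (hd₂ : Differentiable ℝ f₂)
    (hb₂' : ∃ C, ∀ x, |deriv f₂ x| ≤ C) (hu₂' : UniformContinuous (deriv f₂))
    (h : ℝ) (hh : 0 < h) (C : ℝ)
    (hC : ∀ x, |f₁ x - f₂ x + h * (|deriv f₁ x| - |deriv f₂ x|)| ≤ C) :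
    ∀ x, |f₁ x - f₂ x| ≤ C :=
  stmt10_general f₁ f₂ hb₁ hd₁ hb₂ hd₂ h hh C hC
end

section
/- The operator 1 + h·B with Bf := |f'| on D(B) = BUC¹(ℝ) is not surjective onto BUC(ℝ) for any h > 0. Concretely, for u(x) := (1 − |x|)·1_{[−1,1]}(x), there is no f ∈ BUC¹(ℝ) with f(x) + h|f'(x)| = u(x) for all x ∈ ℝ. -/
/-!
A bounded `C¹` function `w` with `|w| ≤ h |w'|` vanishes: at a point where `w > 0` and `w' ≥ 0`
the inequality forces `w' > 0`, so `w` increases and `w' ≥ w(x₀) / h` persists to the right,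
making `w` grow linearly (the other sign cases follow by replacing `w(x)` with `-w(x)` or `w(-x)`).
The difference `w = f - g` of two solutions of `f + h |f'| = u` satisfies `|w| ≤ |h| |w'|`, so
solutions are unique. As the tent function `u` is even, so is the solution `f`; then
`f'(0) = 0` and `f(0) = u(0) = 1`, while `f ≤ u` gives `f(x) ≤ 1 - x` for small `x > 0`, whence
`f'(0) ≤ -1`.
-/

/-- The tent function `u(x) = (1 - |x|) 1_{[-1,1]}(x)`. -/
noncomputable def tent (x : ℝ) : ℝ := if |x| ≤ 1 then 1 - |x| else 0

open Set Filter Topology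

section DerivativeDominates

variable {ψ : ℝ → ℝ} {h : ℝ}

theorem le_and_deriv_nonneg_of_abs_le_mul_abs_deriv (hψ : Differentiable ℝ ψ)
    (hψ' : Continuous (deriv ψ)) (hineq : ∀ x, |ψ x| ≤ h * |deriv ψ x|) {x₀ : ℝ}
    (h0 : 0 < ψ x₀) (h1 : 0 ≤ deriv ψ x₀) {x : ℝ} (hx : x₀ ≤ x) :
    ψ x₀ ≤ ψ x ∧ 0 ≤ deriv ψ x := by
  set s : Set ℝ := {x | ψ x₀ ≤ ψ x ∧ 0 ≤ deriv ψ x}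
  have hs : IsClosed s :=
    (isClosed_le continuous_const hψ.continuous).inter (isClosed_le continuous_const hψ')
  refine (hs.inter isClosed_Icc).Icc_subset_of_forall_mem_nhdsWithin ⟨le_rfl, h1⟩ ?_
    (right_mem_Icc.2 hx)
  rintro t ⟨⟨hψt, hdt⟩, -⟩
  have hdt_ne : deriv ψ t ≠ 0 := by
    intro hzero
    have := hineq t
    rw [hzero, abs_zero, mul_zero, abs_nonpos_iff] at this
    linarith
  obtain ⟨l, r, ⟨hlt, htr⟩, hlr⟩ := mem_nhds_iff_exists_Ioo_subset.1
    ((hψ'.tendsto t).eventually_const_lt (lt_of_le_of_ne hdt hdt_ne.symm))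
  have hmono : MonotoneOn ψ (Ioo l r) :=
    monotoneOn_of_deriv_nonneg (convex_Ioo l r) hψ.continuous.continuousOn
      hψ.differentiableOn fun y hy ↦ (hlr (by rwa [interior_Ioo] at hy)).le
  filter_upwards [Ioo_mem_nhdsGT htr] with y hy
  exact ⟨hψt.trans (hmono ⟨hlt, htr⟩ ⟨hlt.trans hy.1, hy.2⟩ hy.1.le),
    (hlr ⟨hlt.trans hy.1, hy.2⟩).le⟩

theorem not_bddAbove_range_of_abs_le_mul_abs_deriv (hψ : Differentiable ℝ ψ)
    (hψ' : Continuous (deriv ψ)) (hineq : ∀ x, |ψ x| ≤ h * |deriv ψ x|) {x₀ : ℝ}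
    (h0 : 0 < ψ x₀) (h1 : 0 ≤ deriv ψ x₀) : ¬ BddAbove (range ψ) := by
  set c := ψ x₀
  have hh : 0 < h := by
    by_contra! hh
    nlinarith [hineq x₀, abs_nonneg (deriv ψ x₀), le_abs_self c]
  have hderiv : ∀ x ∈ interior (Ici x₀), c / h ≤ deriv ψ x := by
    intro x hx
    rw [interior_Ici] at hx
    obtain ⟨hcx, hdx⟩ := le_and_deriv_nonneg_of_abs_le_mul_abs_deriv hψ hψ' hineq h0 h1 hx.le
    have := hineq x
    rw [abs_of_pos (h0.trans_le hcx), abs_of_nonneg hdx] at this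
    rw [div_le_iff₀' hh]
    linarith
  have hgrowth := (convex_Ici x₀).mul_sub_le_image_sub_of_le_deriv
    hψ.continuous.continuousOn hψ.differentiableOn hderiv
  rintro ⟨M, hM⟩
  set y := x₀ + h / c * |M|
  have hy : x₀ ≤ y := le_add_of_nonneg_right (by positivity)
  have hcy : c / h * (y - x₀) = |M| := by simp only [y]; field_simp; ring
  have := hgrowth x₀ self_mem_Ici y hy hy
  linarith [hM ⟨y, rfl⟩, le_abs_self M]

theorem nonpos_of_abs_le_mul_abs_deriv (hψ : Differentiable ℝ ψ)
    (hψ' : Continuous (deriv ψ)) (hb : BddAbove (range ψ))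
    (hineq : ∀ x, |ψ x| ≤ h * |deriv ψ x|) (x : ℝ) : ψ x ≤ 0 := by
  by_contra! hx
  rcases le_total 0 (deriv ψ x) with hd | hd
  · exact not_bddAbove_range_of_abs_le_mul_abs_deriv hψ hψ' hineq hx hd hb
  · have hderiv : deriv (fun y ↦ ψ (-y)) = fun y ↦ -deriv ψ (-y) :=
      funext fun _ ↦ deriv_comp_neg _ _
    refine not_bddAbove_range_of_abs_le_mul_abs_deriv (ψ := fun y ↦ ψ (-y)) (h := h)
      (hψ.comp differentiable_neg) (hderiv ▸ (hψ'.comp continuous_neg).neg) (x₀ := -x) ?_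
      (by simpa using hx) (by simpa [hderiv] using hd) (hb.mono ?_)
    · simpa [hderiv] using fun y ↦ hineq (-y)
    · rintro _ ⟨y, rfl⟩
      exact ⟨-y, rfl⟩

theorem eq_zero_of_abs_le_mul_abs_deriv (hψ : Differentiable ℝ ψ)
    (hψ' : Continuous (deriv ψ)) {C : ℝ} (hb : ∀ x, |ψ x| ≤ C)
    (hineq : ∀ x, |ψ x| ≤ h * |deriv ψ x|) (x : ℝ) : ψ x = 0 := by
  have hbdd : BddAbove (range ψ) :=
    ⟨C, by rintro _ ⟨y, rfl⟩; exact (le_abs_self _).trans (hb y)⟩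
  have hbdd_neg : BddAbove (range (-ψ)) :=
    ⟨C, by rintro _ ⟨y, rfl⟩; exact (neg_le_abs _).trans (hb y)⟩
  have hle := nonpos_of_abs_le_mul_abs_deriv hψ hψ' hbdd hineq x
  have hge : -ψ x ≤ 0 := nonpos_of_abs_le_mul_abs_deriv hψ.neg
    (by rw [deriv.neg']; exact hψ'.neg) hbdd_neg (by simpa [deriv.neg'] using hineq) x
  linarith

end DerivativeDominates

theorem eq_of_add_mul_abs_deriv_eq {f g : ℝ → ℝ} {h C D : ℝ}
    (hf : Differentiable ℝ f) (hf' : Continuous (deriv f)) (hfC : ∀ x, |f x| ≤ C)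
    (hg : Differentiable ℝ g) (hg' : Continuous (deriv g)) (hgD : ∀ x, |g x| ≤ D)
    (heq : ∀ x, f x + h * |deriv f x| = g x + h * |deriv g x|) (x : ℝ) : f x = g x := by
  have hderiv : deriv (f - g) = deriv f - deriv g :=
    funext fun y ↦ deriv_sub (hf y) (hg y)
  refine sub_eq_zero.1 <| eq_zero_of_abs_le_mul_abs_deriv (hf.sub hg)
    (hderiv ▸ hf'.sub hg') (C := C + D) (h := |h|)
    (fun y ↦ (abs_sub _ _).trans (add_le_add (hfC y) (hgD y))) (fun y ↦ ?_) x
  have hdiff : f y - g y = h * (|deriv g y| - |deriv f y|) := by linarith [heq y]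
  rw [Pi.sub_apply, hdiff, hderiv, Pi.sub_apply, abs_mul, abs_sub_comm (deriv f y)]
  exact mul_le_mul_of_nonneg_left (abs_abs_sub_abs_le_abs_sub _ _) (abs_nonneg h)

theorem HasDerivAt.le_of_eventually_le_add_mul {f : ℝ → ℝ} {f' a m : ℝ}
    (hf : HasDerivAt f f' a) (hle : ∀ᶠ x in 𝓝[>] a, f x ≤ f a + m * (x - a)) :
    f' ≤ m := by
  refine le_of_tendsto (hf.tendsto_slope.mono_left (nhdsGT_le_nhdsNE a)) ?_
  filter_upwards [hle, self_mem_nhdsWithin] with x hx hax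
  rw [slope_def_field, div_le_iff₀ (sub_pos.2 hax)]
  linarith

theorem tent_neg (x : ℝ) : tent (-x) = tent x := by simp [tent, abs_neg]

/-- The operator `1 + h B` with `B f = |f'|` on `D(B) = BUC¹(ℝ)` is not surjective: for any
`h > 0` there is no `f ∈ BUC¹(ℝ)` with `f(x) + h|f'(x)| = u(x)` for all `x`, where `u` is the
tent function. -/
theorem stmt11 (h : ℝ) (hh : 0 < h) :
    ¬ ∃ f : ℝ → ℝ, (∃ C, ∀ x, |f x| ≤ C) ∧ UniformContinuous f ∧
      Differentiable ℝ f ∧ (∃ C, ∀ x, |deriv f x| ≤ C) ∧ UniformContinuous (deriv f) ∧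
      ∀ x, f x + h * |deriv f x| = tent x := by
  rintro ⟨f, ⟨C, hC⟩, -, hf, -, hf', heq⟩
  have hderiv_neg : deriv (fun x ↦ f (-x)) = fun x ↦ -deriv f (-x) :=
    funext fun _ ↦ deriv_comp_neg _ _
  have heven : ∀ x, f (-x) = f x :=
    eq_of_add_mul_abs_deriv_eq (h := h) (hf.comp differentiable_neg)
      (hderiv_neg ▸ (hf'.continuous.comp continuous_neg).neg) (fun x ↦ hC (-x))
      hf hf'.continuous hC (fun x ↦ by rw [hderiv_neg, abs_neg, heq, heq, tent_neg])
  have hd0 : deriv f 0 = 0 := by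
    have := congrFun hderiv_neg 0
    rw [funext heven, neg_zero] at this
    linarith
  have hf0 : f 0 = 1 := by simpa [hd0, tent] using heq 0
  have hslope : deriv f 0 ≤ -1 := by
    refine (hf 0).hasDerivAt.le_of_eventually_le_add_mul ?_
    filter_upwards [Ioo_mem_nhdsGT one_pos] with x ⟨hx0, hx1⟩
    have htent : tent x = 1 - x := by
      rw [tent, abs_of_pos hx0, if_pos hx1.le]
    linarith [heq x, mul_nonneg hh.le (abs_nonneg (deriv f x))]
  linarith
end

section
/- Let f : ℝ → ℝ be defined (on [−2,2], extended to an element of BUC¹) by f(x) = x² for x ∈ [0,2] and f(x) = x⁴ for x ∈ [−2,0). Then the function g(x) := sup_{|y|≤1} f(x+y) satisfies g(x) = (x+1)² for x ∈ [0,1] and g(x) = (x−1)⁴ for x ∈ [−1,0), and g is differentiable on (−1,0)∪(0,1) with g'(x) = 2(x+1) on (0,1) and g'(x) = 4(x−1)³ on (−1,0); consequently |g'| has a jump at 0 (left limit 4, right limit 2) and is not continuous. -/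
/-!
On `[x - 1, x + 1]` the supremum of `f` is attained at an endpoint. For `x ∈ [0, 1]` the right
endpoint lies in `[1, 2]`, where `f(x + 1) = (x + 1)² ≥ 1`, while `f ≤ 1` on `[-1, 0)`. For
`x ∈ [-1, 0)` the left endpoint lies in `[-2, -1)`, where `f(x - 1) = (x - 1)⁴ ≥ 1`, while
`f ≤ 1` on `[0, 1]` and `x ↦ x⁴` decreases on `[x - 1, 0)`. The derivative formulas are then
local, and the one-sided limits of `|g'|` at `0` are `|2 (0 + 1)| = 2` and `|4 (0 - 1)³| = 4`.
-/

open Set Filter Topology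

theorem csSup_image_eq_of_forall_le {α β : Type*} [ConditionallyCompleteLattice β]
    {f : α → β} {s : Set α} {a : α} {c : β} (ha : a ∈ s) (hfa : f a = c)
    (h : ∀ t ∈ s, f t ≤ c) : sSup (f '' s) = c :=
  IsGreatest.csSup_eq ⟨hfa ▸ mem_image_of_mem f ha, forall_mem_image.2 h⟩

section Deriv

variable {E : Type*} [NormedAddCommGroup E] [NormedSpace ℝ E]

theorem HasDerivAt.of_eqOn_Ioo {g φ : ℝ → E} {φ' : E} {a b x : ℝ} (hφ : HasDerivAt φ φ' x)
    (hx : x ∈ Ioo a b) (heq : EqOn g φ (Ioo a b)) : HasDerivAt g φ' x :=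
  hφ.congr_of_eventuallyEq <| eventually_of_mem (isOpen_Ioo.mem_nhds hx) heq

theorem tendsto_deriv_nhdsGT_of_hasDerivAt {g g' : ℝ → E} {a b : ℝ} (hab : a < b)
    (hg : ∀ x ∈ Ioo a b, HasDerivAt g (g' x) x) (hg' : ContinuousAt g' a) :
    Tendsto (deriv g) (𝓝[>] a) (𝓝 (g' a)) :=
  (hg'.tendsto.mono_left nhdsWithin_le_nhds).congr' <|
    eventually_of_mem (Ioo_mem_nhdsGT hab) fun x hx => (hg x hx).deriv.symm

theorem tendsto_deriv_nhdsLT_of_hasDerivAt {g g' : ℝ → E} {a b : ℝ} (hab : a < b)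
    (hg : ∀ x ∈ Ioo a b, HasDerivAt g (g' x) x) (hg' : ContinuousAt g' b) :
    Tendsto (deriv g) (𝓝[<] b) (𝓝 (g' b)) :=
  (hg'.tendsto.mono_left nhdsWithin_le_nhds).congr' <|
    eventually_of_mem (Ioo_mem_nhdsLT hab) fun x hx => (hg x hx).deriv.symm

end Deriv

theorem pow_four_le_one_of_mem_Icc {t : ℝ} (ht : t ∈ Icc (-1 : ℝ) 1) : t ^ 4 ≤ 1 := by
  rw [← Even.pow_abs ⟨2, rfl⟩]
  exact pow_le_one₀ (abs_nonneg t) (abs_le.2 ht)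

theorem pow_four_le_pow_four_of_le_of_nonpos {s t : ℝ} (hst : s ≤ t) (ht : t ≤ 0) :
    t ^ 4 ≤ s ^ 4 := by
  have := pow_le_pow_left₀ (neg_nonneg.2 ht) (neg_le_neg hst) 4
  simpa only [Even.neg_pow ⟨2, rfl⟩] using this

section PiecewisePower

variable {f : ℝ → ℝ}

theorem le_add_one_sq_of_mem_Icc (hf1 : ∀ x ∈ Icc (0 : ℝ) 2, f x = x ^ 2)
    (hf2 : ∀ x ∈ Ico (-2 : ℝ) 0, f x = x ^ 4) {x t : ℝ} (hx : x ∈ Icc (0 : ℝ) 1)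
    (ht : t ∈ Icc (x - 1) (x + 1)) : f t ≤ (x + 1) ^ 2 := by
  obtain ⟨hx0, hx1⟩ := hx
  obtain ⟨htl, htr⟩ := ht
  rcases le_or_gt 0 t with ht0 | ht0
  · rw [hf1 t ⟨ht0, by linarith⟩]
    exact pow_le_pow_left₀ ht0 htr 2
  · rw [hf2 t ⟨by linarith, ht0⟩]
    have hone : 1 ≤ (x + 1) ^ 2 := one_le_pow₀ (by linarith)
    linarith [pow_four_le_one_of_mem_Icc ⟨by linarith, ht0.le.trans zero_le_one⟩]

theorem le_sub_one_pow_four_of_mem_Ico (hf1 : ∀ x ∈ Icc (0 : ℝ) 2, f x = x ^ 2)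
    (hf2 : ∀ x ∈ Ico (-2 : ℝ) 0, f x = x ^ 4) {x t : ℝ} (hx : x ∈ Ico (-1 : ℝ) 0)
    (ht : t ∈ Icc (x - 1) (x + 1)) : f t ≤ (x - 1) ^ 4 := by
  obtain ⟨hx0, hx1⟩ := hx
  obtain ⟨htl, htr⟩ := ht
  rcases le_or_gt 0 t with ht0 | ht0
  · rw [hf1 t ⟨ht0, by linarith⟩]
    have hone : 1 ≤ (x - 1) ^ 4 :=
      (pow_four_le_pow_four_of_le_of_nonpos (by linarith : x - 1 ≤ -1) (by norm_num)).trans'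
        (by norm_num)
    linarith [pow_le_one₀ ht0 (by linarith : t ≤ 1) (n := 2)]
  · rw [hf2 t ⟨by linarith, ht0⟩]
    exact pow_four_le_pow_four_of_le_of_nonpos htl ht0.le

end PiecewisePower

/-- For `f` with `f(x) = x²` on `[0,2]` and `f(x) = x⁴` on `[-2,0)`, the function
`g(x) = sup_{|y| ≤ 1} f(x+y)` equals `(x+1)²` on `[0,1]` and `(x-1)⁴` on `[-1,0)`, is
differentiable on `(-1,0) ∪ (0,1)` with the stated derivatives, and `|g'|` has a jump at `0`
(right limit `2`, left limit `4`). -/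
theorem stmt12 (f : ℝ → ℝ)
    (hf1 : ∀ x ∈ Set.Icc (0 : ℝ) 2, f x = x ^ 2)
    (hf2 : ∀ x ∈ Set.Ico (-2 : ℝ) 0, f x = x ^ 4)
    (g : ℝ → ℝ) (hg : ∀ x, g x = sSup (f '' Set.Icc (x - 1) (x + 1))) :
    (∀ x ∈ Set.Icc (0 : ℝ) 1, g x = (x + 1) ^ 2) ∧
    (∀ x ∈ Set.Ico (-1 : ℝ) 0, g x = (x - 1) ^ 4) ∧
    (∀ x ∈ Set.Ioo (0 : ℝ) 1, HasDerivAt g (2 * (x + 1)) x) ∧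
    (∀ x ∈ Set.Ioo (-1 : ℝ) 0, HasDerivAt g (4 * (x - 1) ^ 3) x) ∧
    Filter.Tendsto (fun x => |deriv g x|) (nhdsWithin 0 (Set.Ioi 0)) (nhds 2) ∧
    Filter.Tendsto (fun x => |deriv g x|) (nhdsWithin 0 (Set.Iio 0)) (nhds 4) := by
  have hright : ∀ x ∈ Icc (0 : ℝ) 1, g x = (x + 1) ^ 2 := fun x hx => by
    rw [hg]
    exact csSup_image_eq_of_forall_le (a := x + 1) ⟨by linarith, le_rfl⟩
      (hf1 _ ⟨by linarith [hx.1], by linarith [hx.2]⟩)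
      fun t ht => le_add_one_sq_of_mem_Icc hf1 hf2 hx ht
  have hleft : ∀ x ∈ Ico (-1 : ℝ) 0, g x = (x - 1) ^ 4 := fun x hx => by
    rw [hg]
    exact csSup_image_eq_of_forall_le (a := x - 1) ⟨le_rfl, by linarith⟩
      (hf2 _ ⟨by linarith [hx.1], by linarith [hx.2]⟩)
      fun t ht => le_sub_one_pow_four_of_mem_Ico hf1 hf2 hx ht
  have hderiv_right : ∀ x ∈ Ioo (0 : ℝ) 1, HasDerivAt g (2 * (x + 1)) x := fun x hx =>
    HasDerivAt.of_eqOn_Ioo (by simpa using ((hasDerivAt_id x).add_const 1).fun_pow 2) hx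
      fun y hy => hright y (Ioo_subset_Icc_self hy)
  have hderiv_left : ∀ x ∈ Ioo (-1 : ℝ) 0, HasDerivAt g (4 * (x - 1) ^ 3) x := fun x hx =>
    HasDerivAt.of_eqOn_Ioo (by simpa using ((hasDerivAt_id x).sub_const 1).fun_pow 4) hx
      fun y hy => hleft y (Ioo_subset_Ico_self hy)
  refine ⟨hright, hleft, hderiv_right, hderiv_left, ?_, ?_⟩
  · convert (tendsto_deriv_nhdsGT_of_hasDerivAt one_pos hderiv_right (by fun_prop)).abs
    norm_num
  · convert (tendsto_deriv_nhdsLT_of_hasDerivAt neg_one_lt_zero hderiv_left (by fun_prop)).abs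
    norm_num
end

section
/- Let S be a sublinear monotone semigroup of bounded operators on a Banach lattice X such that each S(t) is Lipschitz with some constant L(t), and suppose −S(s)(−S(t)x) ≥ S(t)(−S(s)(−x)) for all s,t ≥ 0 and x ∈ X. Then the symmetric Lipschitz set D_L^s := {x : x ∈ D_L and −x ∈ D_L}, with D_L := {x : sup_{0<h≤h₀} ‖(S(h)x − x)/h‖ < ∞ for some h₀ > 0}, is invariant: S(t)x ∈ D_L^s for all t ≥ 0 and x ∈ D_L^s. -/
/-!
Lipschitz operators commuting with the semigroup preserve `‖S h x - x‖ = O(h)`, which settles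
`S t x`. For `-S t x` the increment `S h (-S t x) + S t x` is squeezed, using sublinearity and
the hypothesis on `S`, between `-S t (S h x - x)` and `S t (x + S h (-x))`; a solid norm then
bounds it by the sum of the two Lipschitz estimates for `x` and `-x`.
-/

open NNReal

/-- The Lipschitz set `D_L` of the semigroup `S`. -/
def MemLipschitzSet {X : Type*} [NormedAddCommGroup X] (S : ℝ → X → X) (x : X) : Prop :=
  ∃ h₀ > (0 : ℝ), ∃ C : ℝ, ∀ h : ℝ, 0 < h → h ≤ h₀ → ‖S h x - x‖ ≤ C * h

section Sublinear

variable {X : Type*} [AddCommGroup X] [PartialOrder X] [IsOrderedAddMonoid X] {f : X → X}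

theorem map_zero_of_map_smul [Module ℝ X] (hf : ∀ l : ℝ, 0 < l → ∀ x, f (l • x) = l • f x) :
    f 0 = 0 := by
  have h := hf 2 two_pos 0
  rwa [smul_zero, two_smul, left_eq_add] at h

theorem sub_le_map_sub_of_subadditive (hf : ∀ a b, f (a + b) ≤ f a + f b) (a b : X) :
    f a - f b ≤ f (a - b) := by
  simpa using hf (a - b) b

theorem neg_map_neg_le_of_subadditive (hf : ∀ a b, f (a + b) ≤ f a + f b) (hf0 : f 0 = 0)
    (z : X) : -f (-z) ≤ f z := by
  simpa [hf0] using sub_le_map_sub_of_subadditive hf 0 (-z)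

end Sublinear

section SolidNorm

variable {X : Type*} [NormedAddCommGroup X] [Lattice X] [IsOrderedAddMonoid X] [HasSolidNorm X]

theorem norm_le_norm_add_norm_of_neg_le_of_le {u v y : X} (hu : -u ≤ y) (hv : y ≤ v) :
    ‖y‖ ≤ ‖u‖ + ‖v‖ := by
  have habs : |y| ≤ |(|u| + |v|)| := by
    rw [abs_of_nonneg (add_nonneg (abs_nonneg u) (abs_nonneg v)), abs_le']
    exact ⟨hv.trans ((le_abs_self v).trans (le_add_of_nonneg_left (abs_nonneg u))),
      (neg_le.mp hu).trans ((le_abs_self u).trans (le_add_of_nonneg_right (abs_nonneg v)))⟩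
  calc ‖y‖ ≤ ‖|u| + |v|‖ := norm_le_norm_of_abs_le_abs habs
    _ ≤ ‖|u|‖ + ‖|v|‖ := norm_add_le _ _
    _ = ‖u‖ + ‖v‖ := by rw [norm_abs_eq_norm, norm_abs_eq_norm]

end SolidNorm

section LipschitzSet

variable {X : Type*} [NormedAddCommGroup X] {S : ℝ → X → X} {T : X → X} {K : ℝ≥0} {x : X}

theorem MemLipschitzSet.map (hT : LipschitzWith K T)
    (hcomm : ∀ h : ℝ, 0 < h → S h (T x) = T (S h x)) (hx : MemLipschitzSet S x) :
    MemLipschitzSet S (T x) := by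
  obtain ⟨h₀, hh₀, C, hC⟩ := hx
  refine ⟨h₀, hh₀, K * C, fun h hh hle => ?_⟩
  calc ‖S h (T x) - T x‖ = ‖T (S h x) - T x‖ := by rw [hcomm h hh]
    _ ≤ K * ‖S h x - x‖ := hT.norm_sub_le _ _
    _ ≤ K * (C * h) := mul_le_mul_of_nonneg_left (hC h hh hle) K.coe_nonneg
    _ = K * C * h := (mul_assoc _ _ _).symm

theorem MemLipschitzSet.neg_map [Lattice X] [IsOrderedAddMonoid X] [HasSolidNorm X]
    (hT : LipschitzWith K T) (hT0 : T 0 = 0) (hTsub : ∀ a b, T (a + b) ≤ T a + T b)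
    (hSsub : ∀ h : ℝ, 0 < h → ∀ a b, S h (a + b) ≤ S h a + S h b)
    (hS0 : ∀ h : ℝ, 0 < h → S h 0 = 0)
    (hcomm : ∀ h : ℝ, 0 < h → S h (T x) = T (S h x))
    (hcond : ∀ h : ℝ, 0 < h → T (-(S h (-x))) ≤ -(S h (-(T x))))
    (hx : MemLipschitzSet S x) (hx' : MemLipschitzSet S (-x)) :
    MemLipschitzSet S (-(T x)) := by
  obtain ⟨h₁, hh₁, C₁, hC₁⟩ := hx
  obtain ⟨h₂, hh₂, C₂, hC₂⟩ := hx'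
  have hTnorm : ∀ z, ‖T z‖ ≤ K * ‖z‖ := fun z => by
    simpa [hT0] using hT.norm_sub_le z 0
  refine ⟨min h₁ h₂, lt_min hh₁ hh₂, K * C₁ + K * C₂, fun h hh hle => ?_⟩
  have lower : -T (S h x - x) ≤ S h (-(T x)) + T x := by
    have h1 := neg_map_neg_le_of_subadditive (hSsub h hh) (hS0 h hh) (T x)
    have h2 := sub_le_map_sub_of_subadditive hTsub (S h x) x
    rw [hcomm h hh] at h1
    rw [neg_le]
    calc -(S h (-(T x)) + T x) = -S h (-(T x)) - T x := by abel
      _ ≤ T (S h x) - T x := sub_le_sub_right h1 _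
      _ ≤ T (S h x - x) := h2
  have upper : S h (-(T x)) + T x ≤ T (x + S h (-x)) := by
    have h1 := le_neg.mp (hcond h hh)
    have h2 := sub_le_map_sub_of_subadditive hTsub x (-S h (-x))
    rw [sub_neg_eq_add] at h2
    calc S h (-(T x)) + T x ≤ -T (-S h (-x)) + T x := add_le_add_left h1 _
      _ = T x - T (-S h (-x)) := by abel
      _ ≤ T (x + S h (-x)) := h2
  have hC₂' : ‖x + S h (-x)‖ ≤ C₂ * h := by
    simpa [add_comm] using hC₂ h hh (hle.trans (min_le_right _ _))
  calc ‖S h (-(T x)) - -(T x)‖ = ‖S h (-(T x)) + T x‖ := by rw [sub_neg_eq_add]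
    _ ≤ ‖T (S h x - x)‖ + ‖T (x + S h (-x))‖ :=
        norm_le_norm_add_norm_of_neg_le_of_le lower upper
    _ ≤ K * (C₁ * h) + K * (C₂ * h) := by
        gcongr
        · exact (hTnorm _).trans (mul_le_mul_of_nonneg_left
            (hC₁ h hh (hle.trans (min_le_left _ _))) K.coe_nonneg)
        · exact (hTnorm _).trans (mul_le_mul_of_nonneg_left hC₂' K.coe_nonneg)
    _ = (K * C₁ + K * C₂) * h := by ring

end LipschitzSet

theorem stmt13_general {X : Type*} [NormedAddCommGroup X] [Lattice X] [IsOrderedAddMonoid X]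
    [HasSolidNorm X] [NormedSpace ℝ X] (S : ℝ → X → X)
    (hsg : ∀ s t : ℝ, 0 ≤ s → 0 ≤ t → ∀ x, S (s + t) x = S t (S s x))
    (hsub : ∀ t : ℝ, 0 ≤ t → ∀ x y : X, S t (x + y) ≤ S t x + S t y)
    (hhom : ∀ t : ℝ, 0 ≤ t → ∀ l : ℝ, 0 < l → ∀ x, S t (l • x) = l • S t x)
    (hlip : ∀ t : ℝ, 0 ≤ t → ∃ L : ℝ, ∀ x y : X, ‖S t x - S t y‖ ≤ L * ‖x - y‖)
    (hcond : ∀ s t : ℝ, 0 ≤ s → 0 ≤ t → ∀ x : X,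
      S t (-(S s (-x))) ≤ -(S s (-(S t x))))
    (x : X)
    (hx : ∃ h₀ > (0 : ℝ), ∃ C : ℝ, ∀ h : ℝ, 0 < h → h ≤ h₀ → ‖S h x - x‖ ≤ C * h)
    (hx' : ∃ h₀ > (0 : ℝ), ∃ C : ℝ, ∀ h : ℝ, 0 < h → h ≤ h₀ → ‖S h (-x) - (-x)‖ ≤ C * h)
    (t : ℝ) (ht : 0 ≤ t) :
    (∃ h₀ > (0 : ℝ), ∃ C : ℝ, ∀ h : ℝ, 0 < h → h ≤ h₀ →
      ‖S h (S t x) - S t x‖ ≤ C * h) ∧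
    (∃ h₀ > (0 : ℝ), ∃ C : ℝ, ∀ h : ℝ, 0 < h → h ≤ h₀ →
      ‖S h (-(S t x)) - (-(S t x))‖ ≤ C * h) := by
  obtain ⟨L, hL⟩ := hlip t ht
  have hT : LipschitzWith L.toNNReal (S t) :=
    LipschitzWith.of_dist_le' fun a b => by simpa only [dist_eq_norm] using hL a b
  have hzero : ∀ u : ℝ, 0 ≤ u → S u 0 = 0 := fun u hu => map_zero_of_map_smul (hhom u hu)
  have hcomm : ∀ h : ℝ, 0 < h → S h (S t x) = S t (S h x) := fun h hh => by
    rw [← hsg t h ht hh.le, ← hsg h t hh.le ht, add_comm]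
  exact ⟨MemLipschitzSet.map hT hcomm hx,
    MemLipschitzSet.neg_map hT (hzero t ht) (hsub t ht) (fun h hh => hsub h hh.le)
      (fun h hh => hzero h hh.le) hcomm (fun h hh => hcond h t hh.le ht x) hx hx'⟩

/-- For a sublinear monotone semigroup of Lipschitz operators on a Banach lattice satisfying
`-S(s)(-S(t)x) ≥ S(t)(-S(s)(-x))`, the symmetric Lipschitz set `D_L^s` is invariant. -/
theorem stmt13 {X : Type*} [NormedAddCommGroup X] [Lattice X] [IsOrderedAddMonoid X]
    [HasSolidNorm X] [NormedSpace ℝ X] [PosSMulStrictMono ℝ X] [PosSMulReflectLT ℝ X]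
    [CompleteSpace X] (S : ℝ → X → X)
    (h0 : ∀ x, S 0 x = x)
    (hsg : ∀ s t : ℝ, 0 ≤ s → 0 ≤ t → ∀ x, S (s + t) x = S t (S s x))
    (hsub : ∀ t : ℝ, 0 ≤ t → ∀ x y : X, S t (x + y) ≤ S t x + S t y)
    (hhom : ∀ t : ℝ, 0 ≤ t → ∀ l : ℝ, 0 < l → ∀ x, S t (l • x) = l • S t x)
    (hmono : ∀ t : ℝ, 0 ≤ t → Monotone (S t))
    (hlip : ∀ t : ℝ, 0 ≤ t → ∃ L : ℝ, ∀ x y : X, ‖S t x - S t y‖ ≤ L * ‖x - y‖)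
    (hcond : ∀ s t : ℝ, 0 ≤ s → 0 ≤ t → ∀ x : X,
      S t (-(S s (-x))) ≤ -(S s (-(S t x))))
    (x : X)
    (hx : ∃ h₀ > (0 : ℝ), ∃ C : ℝ, ∀ h : ℝ, 0 < h → h ≤ h₀ → ‖S h x - x‖ ≤ C * h)
    (hx' : ∃ h₀ > (0 : ℝ), ∃ C : ℝ, ∀ h : ℝ, 0 < h → h ≤ h₀ → ‖S h (-x) - (-x)‖ ≤ C * h)
    (t : ℝ) (ht : 0 ≤ t) :
    (∃ h₀ > (0 : ℝ), ∃ C : ℝ, ∀ h : ℝ, 0 < h → h ≤ h₀ →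
      ‖S h (S t x) - S t x‖ ≤ C * h) ∧
    (∃ h₀ > (0 : ℝ), ∃ C : ℝ, ∀ h : ℝ, 0 < h → h ≤ h₀ →
      ‖S h (-(S t x)) - (-(S t x))‖ ≤ C * h) :=
  stmt13_general S hsg hsub hhom hlip hcond x hx hx' t ht
end

section
/- Let S be a sublinear monotone semigroup on a Banach lattice X. Then the symmetric Lipschitz set D_L^s := {x ∈ X : sup_{0<h≤h₀} ‖(S(h)x−x)/h‖ < ∞ and sup_{0<h≤h₀} ‖(S(h)(−x)+x)/h‖ < ∞ for some h₀ > 0} is a linear subspace of X. -/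
/-!
Write `D_L` for the set of `x` with `S h x - x = O(h)` as `h → 0⁺`, so that
`D_L^s = D_L ∩ -D_L`.
Sublinearity traps the defect of a sum between two combinations of defects,
`(S h x - x) - (S h (-y) + y) ≤ S h (x + y) - (x + y) ≤ (S h x - x) + (S h y - y)`,
and in a normed lattice the norm of an element is controlled by the norms of any two bounds
around it. Hence `D_L^s` is closed under addition; positive homogeneity of `S h` and the symmetry
of `D_L^s` under negation give closure under all scalars.
-/

open Filter Topology Asymptotics

/-- Membership in the symmetric Lipschitz set `D_L^s` of a semigroup `S`. -/
def memDLs {X : Type*} [NormedAddCommGroup X] (S : ℝ → X → X) (x : X) : Prop :=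
  ∃ h₀ > (0 : ℝ), ∃ C : ℝ, ∀ h : ℝ, 0 < h → h ≤ h₀ →
    ‖S h x - x‖ ≤ C * h ∧ ‖S h (-x) + x‖ ≤ C * h

theorem norm_le_norm_add_norm_of_le_of_le {X : Type*} [NormedAddCommGroup X] [Lattice X]
    [IsOrderedAddMonoid X] [HasSolidNorm X] {a z b : X} (ha : a ≤ z) (hb : z ≤ b) :
    ‖z‖ ≤ ‖a‖ + ‖b‖ := by
  have hz : |z| ≤ |a| ⊔ |b| := abs_le'.2
    ⟨hb.trans ((le_abs_self b).trans le_sup_right),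
      (neg_le_neg ha).trans ((neg_le_abs a).trans le_sup_left)⟩
  calc ‖z‖ ≤ ‖|a| ⊔ |b|‖ :=
        norm_le_norm_of_abs_le_abs (by rwa [abs_of_nonneg (le_sup_of_le_left (abs_nonneg a))])
    _ ≤ ‖|a|‖ + ‖|b|‖ := norm_sup_le_add _ _
    _ = ‖a‖ + ‖b‖ := by rw [norm_abs_eq_norm, norm_abs_eq_norm]

section Subadditive

variable {X : Type*} [AddCommGroup X] [PartialOrder X] [IsOrderedAddMonoid X] {T : X → X}

theorem map_add_sub_add_le (hT : ∀ x y, T (x + y) ≤ T x + T y) (x y : X) :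
    T (x + y) - (x + y) ≤ (T x - x) + (T y - y) := by
  calc T (x + y) - (x + y) ≤ (T x + T y) - (x + y) := sub_le_sub_right (hT x y) _
    _ = (T x - x) + (T y - y) := by abel

theorem sub_le_map_add_sub_add (hT : ∀ x y, T (x + y) ≤ T x + T y) (x y : X) :
    (T x - x) - (T (-y) - -y) ≤ T (x + y) - (x + y) := by
  have hx : T x ≤ T (x + y) + T (-y) := by simpa using hT (x + y) (-y)
  calc (T x - x) - (T (-y) - -y) = (T x - T (-y)) - (x + y) := by abel
    _ ≤ T (x + y) - (x + y) := sub_le_sub_right (sub_le_iff_le_add.2 hx) _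

end Subadditive

section LipschitzSet

variable {X : Type*} [NormedAddCommGroup X] (S : ℝ → X → X)

def lipschitzSet : Set X := {x | (fun h => S h x - x) =O[𝓝[>] 0] id}

variable {S}

theorem memDLs_iff_mem_lipschitzSet {x : X} :
    memDLs S x ↔ x ∈ lipschitzSet S ∧ -x ∈ lipschitzSet S := by
  simp only [lipschitzSet, Set.mem_ofPred_eq, sub_neg_eq_add]
  constructor
  · rintro ⟨h₀, hh₀, C, hC⟩
    have hbound : ∀ᶠ h in 𝓝[>] (0 : ℝ),
        ‖S h x - x‖ ≤ C * ‖id h‖ ∧ ‖S h (-x) + x‖ ≤ C * ‖id h‖ := by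
      filter_upwards [Ioc_mem_nhdsGT hh₀] with h ⟨hpos, hle⟩
      rw [id, Real.norm_of_nonneg hpos.le]
      exact hC h hpos hle
    exact ⟨.of_bound C (hbound.mono fun _ => And.left),
      .of_bound C (hbound.mono fun _ => And.right)⟩
  · rintro ⟨hx, hnx⟩
    obtain ⟨c, hc⟩ := hx.bound
    obtain ⟨c', hc'⟩ := hnx.bound
    obtain ⟨h₀, hh₀, hIoc⟩ := mem_nhdsGT_iff_exists_Ioc_subset.1 (hc.and hc')
    refine ⟨h₀, hh₀, max c c', fun h hpos hle => ?_⟩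
    obtain ⟨h1, h2⟩ : ‖S h x - x‖ ≤ c * h ∧ ‖S h (-x) + x‖ ≤ c' * h := by
      simpa [abs_of_pos hpos] using hIoc ⟨hpos, hle⟩
    exact ⟨h1.trans (by gcongr; exact le_max_left _ _),
      h2.trans (by gcongr; exact le_max_right _ _)⟩

theorem zero_mem_lipschitzSet [NormedSpace ℝ X]
    (hhom : ∀ t, 0 < t → ∀ l : ℝ, 0 < l → ∀ x : X, S t (l • x) = l • S t x) :
    (0 : X) ∈ lipschitzSet S := by
  refine (isBigO_zero id _).congr' ?_ EventuallyEq.rfl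
  filter_upwards [self_mem_nhdsWithin] with h hh
  have hS0 := hhom h hh 2 two_pos 0
  rw [smul_zero, two_smul, left_eq_add] at hS0
  simp [hS0]

theorem add_mem_lipschitzSet [Lattice X] [IsOrderedAddMonoid X] [HasSolidNorm X]
    (hsub : ∀ t, 0 < t → ∀ x y : X, S t (x + y) ≤ S t x + S t y) {x y : X}
    (hx : x ∈ lipschitzSet S) (hy : y ∈ lipschitzSet S) (hny : -y ∈ lipschitzSet S) :
    x + y ∈ lipschitzSet S := by
  have hbound : ∀ᶠ h in 𝓝[>] (0 : ℝ), ‖S h (x + y) - (x + y)‖ ≤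
      ‖(S h x - x) - (S h (-y) - -y)‖ + ‖(S h x - x) + (S h y - y)‖ := by
    filter_upwards [self_mem_nhdsWithin] with h hh
    exact norm_le_norm_add_norm_of_le_of_le (sub_le_map_add_sub_add (hsub h hh) x y)
      (map_add_sub_add_le (hsub h hh) x y)
  exact (IsBigO.of_norm_eventuallyLE hbound).trans
    ((hx.sub hny).norm_left.add (hx.add hy).norm_left)

theorem smul_mem_lipschitzSet [NormedSpace ℝ X]
    (hhom : ∀ t, 0 < t → ∀ l : ℝ, 0 < l → ∀ x : X, S t (l • x) = l • S t x)
    {c : ℝ} (hc : 0 < c) {x : X} (hx : x ∈ lipschitzSet S) : c • x ∈ lipschitzSet S := by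
  refine (hx.const_smul_left c).congr' ?_ EventuallyEq.rfl
  filter_upwards [self_mem_nhdsWithin] with h hh
  rw [Pi.smul_apply, smul_sub, hhom h hh c hc x]

theorem memDLs.neg {x : X} (hx : memDLs S x) : memDLs S (-x) := by
  rw [memDLs_iff_mem_lipschitzSet, neg_neg] at *
  exact hx.symm

theorem memDLs_zero [NormedSpace ℝ X]
    (hhom : ∀ t, 0 < t → ∀ l : ℝ, 0 < l → ∀ x : X, S t (l • x) = l • S t x) :
    memDLs S 0 := by
  rw [memDLs_iff_mem_lipschitzSet, neg_zero]
  exact ⟨zero_mem_lipschitzSet hhom, zero_mem_lipschitzSet hhom⟩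

theorem memDLs.add [Lattice X] [IsOrderedAddMonoid X] [HasSolidNorm X]
    (hsub : ∀ t, 0 < t → ∀ x y : X, S t (x + y) ≤ S t x + S t y) {x y : X}
    (hx : memDLs S x) (hy : memDLs S y) : memDLs S (x + y) := by
  rw [memDLs_iff_mem_lipschitzSet, neg_add] at *
  exact ⟨add_mem_lipschitzSet hsub hx.1 hy.1 hy.2,
    add_mem_lipschitzSet hsub hx.2 hy.2 (by simpa using hy.1)⟩

theorem memDLs.smul [NormedSpace ℝ X]
    (hhom : ∀ t, 0 < t → ∀ l : ℝ, 0 < l → ∀ x : X, S t (l • x) = l • S t x) {x : X}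
    (hx : memDLs S x) (c : ℝ) : memDLs S (c • x) := by
  have hpos : ∀ {c : ℝ} {x : X}, 0 < c → memDLs S x → memDLs S (c • x) := by
    intro c x hc hx
    rw [memDLs_iff_mem_lipschitzSet, ← smul_neg] at *
    exact ⟨smul_mem_lipschitzSet hhom hc hx.1, smul_mem_lipschitzSet hhom hc hx.2⟩
  rcases lt_trichotomy c 0 with hc | rfl | hc
  · rw [← neg_smul_neg]
    exact hpos (neg_pos.2 hc) hx.neg
  · rw [zero_smul]
    exact memDLs_zero hhom
  · exact hpos hc hx

end LipschitzSet

def symmLipschitzSubmodule {X : Type*} [NormedAddCommGroup X] [Lattice X]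
    [IsOrderedAddMonoid X] [HasSolidNorm X] [NormedSpace ℝ X] (S : ℝ → X → X)
    (hsub : ∀ t, 0 < t → ∀ x y : X, S t (x + y) ≤ S t x + S t y)
    (hhom : ∀ t, 0 < t → ∀ l : ℝ, 0 < l → ∀ x : X, S t (l • x) = l • S t x) :
    Submodule ℝ X where
  carrier := {x | memDLs S x}
  zero_mem' := memDLs_zero hhom
  add_mem' := memDLs.add hsub
  smul_mem' c _ hx := hx.smul hhom c

theorem stmt14_general {X : Type*} [NormedAddCommGroup X] [Lattice X] [IsOrderedAddMonoid X]
    [HasSolidNorm X] [NormedSpace ℝ X] (S : ℝ → X → X)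
    (hsub : ∀ t : ℝ, 0 ≤ t → ∀ x y : X, S t (x + y) ≤ S t x + S t y)
    (hhom : ∀ t : ℝ, 0 ≤ t → ∀ l : ℝ, 0 < l → ∀ x, S t (l • x) = l • S t x) :
    memDLs S 0 ∧
    (∀ x y : X, memDLs S x → memDLs S y → memDLs S (x + y)) ∧
    (∀ (x : X) (c : ℝ), memDLs S x → memDLs S (c • x)) :=
  let D := symmLipschitzSubmodule S (fun t ht => hsub t ht.le) (fun t ht => hhom t ht.le)
  ⟨D.zero_mem, fun _ _ => D.add_mem, fun _ c => D.smul_mem c⟩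

/-- For a sublinear monotone semigroup on a Banach lattice, the symmetric Lipschitz set
`D_L^s` is a linear subspace: it contains `0` and is closed under addition and scalar
multiplication. -/
theorem stmt14 {X : Type*} [NormedAddCommGroup X] [Lattice X] [IsOrderedAddMonoid X]
    [HasSolidNorm X] [NormedSpace ℝ X] [PosSMulStrictMono ℝ X]
    [CompleteSpace X] (S : ℝ → X → X)
    (h0 : ∀ x, S 0 x = x)
    (hsg : ∀ s t : ℝ, 0 ≤ s → 0 ≤ t → ∀ x, S (s + t) x = S t (S s x))
    (hsub : ∀ t : ℝ, 0 ≤ t → ∀ x y : X, S t (x + y) ≤ S t x + S t y)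
    (hhom : ∀ t : ℝ, 0 ≤ t → ∀ l : ℝ, 0 < l → ∀ x, S t (l • x) = l • S t x)
    (hmono : ∀ t : ℝ, 0 ≤ t → Monotone (S t)) :
    memDLs S 0 ∧
    (∀ x y : X, memDLs S x → memDLs S y → memDLs S (x + y)) ∧
    (∀ (x : X) (c : ℝ), memDLs S x → memDLs S (c • x)) :=
  stmt14_general S hsub hhom
end

section
/- Let S be a semigroup of operators on a Banach space X such that for every x₀ ∈ X and T > 0 there exist L, r > 0 with ‖S(t)y − S(t)z‖ ≤ L‖y−z‖ for all t ∈ [0,T] and y, z in the ball B(x₀,r), and suppose t ↦ S(t)x is continuous at 0 for each x. If x ∈ X satisfies sup_{0<h≤h₀} ‖(S(h)x − x)/h‖ < ∞ for some h₀ > 0, then the map t ↦ S(t)x is locally Lipschitz on [0,∞). -/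
/-!
For `s ≤ t` close together, `S t x - S s x = S s (S (t - s) x) - S s x`, and `S (t - s) x` lies in
the ball around `x` on which the maps `S s`, `s ≤ T`, are uniformly `L`-Lipschitz; so the
difference-quotient bound gives `‖S t x - S s x‖ ≤ L C (t - s)`. Cutting an arbitrary interval
in `[0, T]` into equal short pieces and telescoping gives the same bound everywhere.
-/

open Finset in
theorem norm_sub_le_mul_abs_of_short_steps {E : Type*} [SeminormedAddCommGroup E] {f : ℝ → E}
    {a b K δ : ℝ} (hδ : 0 < δ)
    (hf : ∀ s t, a ≤ s → s ≤ t → t ≤ b → t - s ≤ δ → ‖f t - f s‖ ≤ K * (t - s)) :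
    ∀ s t, s ∈ Set.Icc a b → t ∈ Set.Icc a b → ‖f t - f s‖ ≤ K * |t - s| := by
  intro s t hs ht
  wlog hst : s ≤ t generalizing s t
  · rw [norm_sub_rev, abs_sub_comm]
    exact this t s ht hs (le_of_not_ge hst)
  obtain ⟨n, hn⟩ := exists_nat_ge ((t - s) / δ)
  have hn1 : (0 : ℝ) < (n + 1 : ℕ) := by positivity
  set h := (t - s) / (n + 1 : ℕ)
  have hh : 0 ≤ h := div_nonneg (sub_nonneg.2 hst) hn1.le
  have hnh : (n + 1 : ℕ) * h = t - s := mul_div_cancel₀ _ hn1.ne'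
  have hhδ : h ≤ δ := by
    rw [div_le_iff₀ hδ] at hn
    push_cast at hnh
    nlinarith
  have hstep : ∀ k ∈ range (n + 1),
      ‖f (s + (k + 1 : ℕ) * h) - f (s + k * h)‖ ≤ K * h := by
    intro k hk
    have hk : ((k + 1 : ℕ) : ℝ) ≤ (n + 1 : ℕ) := by exact_mod_cast mem_range.1 hk
    have := hf (s + k * h) (s + (k + 1 : ℕ) * h) (by nlinarith [hs.1]) (by push_cast; nlinarith)
      (by nlinarith [ht.2]) (by push_cast; linarith)
    simpa [add_mul] using this
  calc ‖f t - f s‖ = ‖∑ k ∈ range (n + 1), (f (s + (k + 1 : ℕ) * h) - f (s + k * h))‖ := by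
        rw [sum_range_sub (fun k : ℕ => f (s + k * h)), hnh]; simp
    _ ≤ ∑ k ∈ range (n + 1), K * h := (norm_sum_le _ _).trans (sum_le_sum hstep)
    _ = K * |t - s| := by
        rw [sum_const, card_range, nsmul_eq_mul, abs_of_nonneg (sub_nonneg.2 hst), ← hnh]
        ring

theorem norm_orbit_sub_le_of_short_step {X : Type*} [SeminormedAddCommGroup X] {S : ℝ → X → X}
    (hsg : ∀ s t : ℝ, 0 ≤ s → 0 ≤ t → ∀ x, S (s + t) x = S t (S s x))
    {x : X} {T L r C δ : ℝ} (hL : 0 ≤ L)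
    (hlip : ∀ t, 0 ≤ t → t ≤ T → ∀ y z : X, ‖y - x‖ ≤ r → ‖z - x‖ ≤ r →
      ‖S t y - S t z‖ ≤ L * ‖y - z‖)
    (hx : ∀ h, 0 < h → h ≤ δ → ‖S h x - x‖ ≤ C * h) (hCδ : C * δ ≤ r)
    (s t : ℝ) (hs : 0 ≤ s) (hst : s ≤ t) (htT : t ≤ T) (hstδ : t - s ≤ δ) :
    ‖S t x - S s x‖ ≤ L * C * (t - s) := by
  rcases hst.eq_or_lt with rfl | hlt
  · simp
  have hh : 0 < t - s := sub_pos.2 hlt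
  have hstep := hx (t - s) hh hstδ
  have hC : 0 ≤ C :=
    le_of_mul_le_mul_right ((zero_mul _).trans_le ((norm_nonneg _).trans hstep)) hh
  have hball : ‖S (t - s) x - x‖ ≤ r :=
    hstep.trans ((mul_le_mul_of_nonneg_left hstδ hC).trans hCδ)
  have hsplit : S t x = S s (S (t - s) x) := by
    rw [← hsg (t - s) s hh.le hs, sub_add_cancel]
  calc ‖S t x - S s x‖ = ‖S s (S (t - s) x) - S s x‖ := by rw [hsplit]
    _ ≤ L * ‖S (t - s) x - x‖ :=
        hlip s hs (hst.trans htT) _ _ hball (by simpa using (norm_nonneg _).trans hball)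
    _ ≤ L * C * (t - s) := by rw [mul_assoc]; exact mul_le_mul_of_nonneg_left hstep hL

theorem stmt15_general {X : Type*} [NormedAddCommGroup X]
    (S : ℝ → X → X)
    (hsg : ∀ s t : ℝ, 0 ≤ s → 0 ≤ t → ∀ x, S (s + t) x = S t (S s x))
    (hlip : ∀ (x₀ : X) (T : ℝ), 0 < T → ∃ L > (0 : ℝ), ∃ r > (0 : ℝ),
      ∀ t : ℝ, 0 ≤ t → t ≤ T → ∀ y z : X, ‖y - x₀‖ ≤ r → ‖z - x₀‖ ≤ r →
        ‖S t y - S t z‖ ≤ L * ‖y - z‖)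
    (x : X)
    (hx : ∃ h₀ > (0 : ℝ), ∃ C : ℝ, ∀ h : ℝ, 0 < h → h ≤ h₀ → ‖S h x - x‖ ≤ C * h) :
    ∀ T : ℝ, 0 < T → ∃ L ≥ (0 : ℝ), ∀ s t : ℝ, s ∈ Set.Icc 0 T → t ∈ Set.Icc 0 T →
      ‖S t x - S s x‖ ≤ L * |t - s| := by
  intro T hT
  obtain ⟨h₀, hh₀, C, hC⟩ := hx
  obtain ⟨L, hL, r, hr, hLr⟩ := hlip x T hT
  set C' := max C 1
  have hC' : 0 < C' := lt_max_of_lt_right one_pos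
  set δ := min h₀ (r / C')
  have hC'δ : C' * δ ≤ r := calc
    C' * δ ≤ C' * (r / C') := mul_le_mul_of_nonneg_left (min_le_right _ _) hC'.le
    _ = r := mul_div_cancel₀ _ hC'.ne'
  have hC'x : ∀ h, 0 < h → h ≤ δ → ‖S h x - x‖ ≤ C' * h := fun h hh hhδ =>
    (hC h hh (hhδ.trans (min_le_left _ _))).trans
      (mul_le_mul_of_nonneg_right (le_max_left _ _) hh.le)
  exact ⟨L * C', by positivity, norm_sub_le_mul_abs_of_short_steps (lt_min hh₀ (div_pos hr hC'))
    (norm_orbit_sub_le_of_short_step hsg hL.le hLr hC'x hC'δ)⟩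

/-- If a semigroup `S` on a Banach space is locally uniformly Lipschitz near each point and
strongly continuous at `0`, then for any `x` with bounded difference quotients at `0` the
orbit map `t ↦ S(t)x` is locally Lipschitz on `[0,∞)`. -/
theorem stmt15 {X : Type*} [NormedAddCommGroup X] [NormedSpace ℝ X] [CompleteSpace X]
    (S : ℝ → X → X)
    (h0 : ∀ x, S 0 x = x)
    (hsg : ∀ s t : ℝ, 0 ≤ s → 0 ≤ t → ∀ x, S (s + t) x = S t (S s x))
    (hlip : ∀ (x₀ : X) (T : ℝ), 0 < T → ∃ L > (0 : ℝ), ∃ r > (0 : ℝ),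
      ∀ t : ℝ, 0 ≤ t → t ≤ T → ∀ y z : X, ‖y - x₀‖ ≤ r → ‖z - x₀‖ ≤ r →
        ‖S t y - S t z‖ ≤ L * ‖y - z‖)
    (hcont : ∀ x : X, Filter.Tendsto (fun t => S t x) (nhdsWithin 0 (Set.Ici 0)) (nhds x))
    (x : X)
    (hx : ∃ h₀ > (0 : ℝ), ∃ C : ℝ, ∀ h : ℝ, 0 < h → h ≤ h₀ → ‖S h x - x‖ ≤ C * h) :
    ∀ T : ℝ, 0 < T → ∃ L ≥ (0 : ℝ), ∀ s t : ℝ, s ∈ Set.Icc 0 T → t ∈ Set.Icc 0 T →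
      ‖S t x - S s x‖ ≤ L * |t - s| :=
  stmt15_general S hsg hlip x hx
end

section
/- Let S be a convex C₀-semigroup on a Banach space X and let x ∈ D_L, i.e., sup_{0<h≤h₀} ‖(S(h)x − x)/h‖ < ∞ for some h₀ > 0. Then S(t)x ∈ D_L for every t ≥ 0. -/
/-!
Since `S(h)` and `S(t)` commute, `S(h)(S(t)x) - S(t)x = S(t)(S(h)x) - S(t)x`, so it suffices that
`S(t)` be Lipschitz on a ball containing `x` and all `S(h)x`, `h ≤ h₀`. It is, because a convex
operator into a normed lattice that is bounded on a ball is Lipschitz on every smaller ball: writing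
`x` as a convex combination of `y` and the point `z` at distance `ε` beyond `x` on the ray from `y`,
convexity bounds `f x - f y` from above by a vector of norm `O(‖x - y‖)`, and solidity of the norm
turns the two one-sided bounds into a bound on `‖f x - f y‖`.
-/

open Metric Set

section NormedLattice

variable {F : Type*} [NormedAddCommGroup F] [Lattice F] [IsOrderedAddMonoid F]

theorem norm_le_add_of_le_of_neg_le [HasSolidNorm F] {a p q : F} (hp : a ≤ p) (hq : -a ≤ q) :
    ‖a‖ ≤ ‖p‖ + ‖q‖ := by
  have habs : |a| ≤ |(|p| + |q|)| := by
    rw [abs_of_nonneg (add_nonneg (abs_nonneg p) (abs_nonneg q))]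
    exact abs_le'.mpr ⟨hp.trans ((le_abs_self p).trans (le_add_of_nonneg_right (abs_nonneg q))),
      hq.trans ((le_abs_self q).trans (le_add_of_nonneg_left (abs_nonneg p)))⟩
  calc ‖a‖ ≤ ‖|p| + |q|‖ := norm_le_norm_of_abs_le_abs habs
    _ ≤ ‖|p|‖ + ‖|q|‖ := norm_add_le _ _
    _ = ‖p‖ + ‖q‖ := by rw [norm_abs_eq_norm, norm_abs_eq_norm]

theorem ConvexOn.sub_le_smul_sub {E : Type*} [AddCommGroup E] [Module ℝ E] [Module ℝ F]
    {f : E → F} {s : Set E} (hf : ConvexOn ℝ s f) {y z : E} (hy : y ∈ s) (hz : z ∈ s)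
    {l : ℝ} (hl₀ : 0 ≤ l) (hl₁ : l ≤ 1) :
    f (l • z + (1 - l) • y) - f y ≤ l • (f z - f y) :=
  calc f (l • z + (1 - l) • y) - f y ≤ l • f z + (1 - l) • f y - f y :=
        sub_le_sub_right (hf.2 hz hy hl₀ (by linarith) (by ring)) _
    _ = l • (f z - f y) := by module

variable {E : Type*} [NormedAddCommGroup E] [NormedSpace ℝ E] [NormedSpace ℝ F]
  {f : E → F} {x₀ : E} {r ε M : ℝ}

theorem ConvexOn.exists_sub_le_and_norm_le (hf : ConvexOn ℝ (closedBall x₀ r) f) (hε : 0 < ε)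
    (hM : ∀ a ∈ closedBall x₀ r, ‖f a‖ ≤ M) {x y : E} (hx : x ∈ closedBall x₀ (r - ε))
    (hy : y ∈ closedBall x₀ r) : ∃ p, f x - f y ≤ p ∧ ‖p‖ ≤ 2 * M / ε * ‖x - y‖ := by
  obtain rfl | hxy := eq_or_ne x y
  · exact ⟨0, by simp, by simp⟩
  set δ := ‖x - y‖
  have hδ : 0 < δ := norm_sub_pos_iff.mpr hxy
  let z := x + (ε / δ) • (x - y)
  have hz : z ∈ closedBall x₀ r := mem_closedBall_iff_norm.2 <|
    calc ‖z - x₀‖ = ‖(x - x₀) + (ε / δ) • (x - y)‖ := by simp only [z, add_sub_right_comm]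
      _ ≤ ‖x - x₀‖ + ‖(ε / δ) • (x - y)‖ := norm_add_le _ _
      _ ≤ r - ε + ε := by
        gcongr
        · exact mem_closedBall_iff_norm.1 hx
        · simp [norm_smul, abs_of_pos hε, hδ.ne', δ]
      _ = r := by ring
  set l := δ / (ε + δ)
  have hl₀ : 0 ≤ l := by positivity
  have hl₁ : l ≤ 1 := (div_le_one (by positivity)).2 (by linarith)
  have hlδ : l ≤ δ / ε := div_le_div_of_nonneg_left hδ.le hε (by linarith)
  have hx_combo : l • z + (1 - l) • y = x := by
    simp only [z, l]
    match_scalars <;> field_simp <;> ring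
  refine ⟨l • (f z - f y), hx_combo ▸ hf.sub_le_smul_sub hy hz hl₀ hl₁, ?_⟩
  calc ‖l • (f z - f y)‖ = l * ‖f z - f y‖ := by rw [norm_smul, Real.norm_of_nonneg hl₀]
    _ ≤ δ / ε * (2 * M) := by
      gcongr
      calc ‖f z - f y‖ ≤ ‖f z‖ + ‖f y‖ := norm_sub_le _ _
        _ ≤ 2 * M := by linarith [hM z hz, hM y hy]
    _ = 2 * M / ε * δ := by ring

theorem ConvexOn.lipschitzOnWith_of_norm_le [HasSolidNorm F]
    (hf : ConvexOn ℝ (closedBall x₀ r) f) (hε : 0 < ε)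
    (hM : ∀ a ∈ closedBall x₀ r, ‖f a‖ ≤ M) :
    LipschitzOnWith (4 * M / ε).toNNReal f (closedBall x₀ (r - ε)) := by
  have hsub : closedBall x₀ (r - ε) ⊆ closedBall x₀ r := closedBall_subset_closedBall (by linarith)
  refine .of_dist_le' fun x hx y hy => ?_
  obtain ⟨p, hp, hpM⟩ := hf.exists_sub_le_and_norm_le hε hM hx (hsub hy)
  obtain ⟨q, hq, hqM⟩ := hf.exists_sub_le_and_norm_le hε hM hy (hsub hx)
  rw [norm_sub_rev] at hqM
  rw [dist_eq_norm, dist_eq_norm]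
  calc ‖f x - f y‖ ≤ ‖p‖ + ‖q‖ := norm_le_add_of_le_of_neg_le hp (by rwa [neg_sub])
    _ ≤ 2 * M / ε * ‖x - y‖ + 2 * M / ε * ‖x - y‖ := add_le_add hpM hqM
    _ = 4 * M / ε * ‖x - y‖ := by ring

theorem ConvexOn.exists_lipschitzOnWith_closedBall [HasSolidNorm F] (hf : ConvexOn ℝ univ f)
    (hbdd : ∀ r : ℝ, 0 < r → ∃ M : ℝ, ∀ x : E, ‖x‖ ≤ r → ‖f x‖ ≤ M)
    (R : ℝ) : ∃ L, LipschitzOnWith L f (closedBall 0 R) := by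
  obtain ⟨M, hM⟩ := hbdd (|R| + 1) (by positivity)
  have hball := hf.subset (subset_univ _) (convex_closedBall 0 (|R| + 1))
  have hLip := hball.lipschitzOnWith_of_norm_le one_pos fun a ha =>
    hM a (mem_closedBall_zero_iff.1 ha)
  exact ⟨_, hLip.mono (closedBall_subset_closedBall (by simp [le_abs_self]))⟩

end NormedLattice

theorem stmt16_general {X : Type*} [NormedAddCommGroup X] [Lattice X] [HasSolidNorm X]
    [IsOrderedAddMonoid X] [NormedSpace ℝ X] (S : ℝ → X → X)
    (hsg : ∀ s t : ℝ, 0 ≤ s → 0 ≤ t → ∀ x, S (s + t) x = S t (S s x))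
    (hconv : ∀ t : ℝ, 0 ≤ t → ∀ x y : X, ∀ l : ℝ, 0 ≤ l → l ≤ 1 →
      S t (l • x + (1 - l) • y) ≤ l • S t x + (1 - l) • S t y)
    (hbdd : ∀ t : ℝ, 0 ≤ t → ∀ r : ℝ, 0 < r → ∃ C : ℝ, ∀ x : X, ‖x‖ ≤ r → ‖S t x‖ ≤ C)
    (x : X)
    (hx : ∃ h₀ > (0 : ℝ), ∃ C : ℝ, ∀ h : ℝ, 0 < h → h ≤ h₀ → ‖S h x - x‖ ≤ C * h)
    (t : ℝ) (ht : 0 ≤ t) :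
    ∃ h₀ > (0 : ℝ), ∃ C : ℝ, ∀ h : ℝ, 0 < h → h ≤ h₀ → ‖S h (S t x) - S t x‖ ≤ C * h := by
  obtain ⟨h₀, hh₀, C, hC⟩ := hx
  have hconvex : ConvexOn ℝ univ (S t) :=
    ⟨convex_univ, fun a _ b _ l m hl hm hlm => by
      obtain rfl : m = 1 - l := by linarith
      exact hconv t ht a b l hl (by linarith)⟩
  obtain ⟨L, hL⟩ := hconvex.exists_lipschitzOnWith_closedBall (hbdd t ht) (‖x‖ + |C| * h₀)
  refine ⟨h₀, hh₀, L * C, fun h hh hhh₀ => ?_⟩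
  have hx_mem : x ∈ closedBall 0 (‖x‖ + |C| * h₀) :=
    mem_closedBall_zero_iff.2 (le_add_of_nonneg_right (by positivity))
  have hShx_mem : S h x ∈ closedBall 0 (‖x‖ + |C| * h₀) := by
    rw [mem_closedBall_zero_iff]
    calc ‖S h x‖ ≤ ‖x‖ + ‖S h x - x‖ := norm_le_norm_add_norm_sub' _ _
      _ ≤ ‖x‖ + |C| * h₀ := by
        gcongr
        exact (hC h hh hhh₀).trans (by gcongr; exact le_abs_self C)
  have hcomm : S h (S t x) = S t (S h x) := by
    rw [← hsg t h ht hh.le, ← hsg h t hh.le ht, add_comm]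
  calc ‖S h (S t x) - S t x‖ = ‖S t (S h x) - S t x‖ := by rw [hcomm]
    _ ≤ L * ‖S h x - x‖ := hL.norm_sub_le hShx_mem hx_mem
    _ ≤ L * (C * h) := by gcongr; exact hC h hh hhh₀
    _ = L * C * h := by ring

/-- For a convex `C₀`-semigroup of bounded operators on a Banach lattice, the Lipschitz set
`D_L` is invariant: if `x ∈ D_L` then `S(t)x ∈ D_L` for all `t ≥ 0`. -/
theorem stmt16 {X : Type*} [NormedAddCommGroup X] [Lattice X] [HasSolidNorm X]
    [IsOrderedAddMonoid X] [NormedSpace ℝ X] [PosSMulStrictMono ℝ X]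
    [CompleteSpace X] (S : ℝ → X → X)
    (h0 : ∀ x, S 0 x = x)
    (hsg : ∀ s t : ℝ, 0 ≤ s → 0 ≤ t → ∀ x, S (s + t) x = S t (S s x))
    (hconv : ∀ t : ℝ, 0 ≤ t → ∀ x y : X, ∀ l : ℝ, 0 ≤ l → l ≤ 1 →
      S t (l • x + (1 - l) • y) ≤ l • S t x + (1 - l) • S t y)
    (hbdd : ∀ t : ℝ, 0 ≤ t → ∀ r : ℝ, 0 < r → ∃ C : ℝ, ∀ x : X, ‖x‖ ≤ r → ‖S t x‖ ≤ C)
    (hcont : ∀ x : X, Filter.Tendsto (fun t => S t x) (nhdsWithin 0 (Set.Ioi 0)) (nhds x))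
    (x : X)
    (hx : ∃ h₀ > (0 : ℝ), ∃ C : ℝ, ∀ h : ℝ, 0 < h → h ≤ h₀ → ‖S h x - x‖ ≤ C * h)
    (t : ℝ) (ht : 0 ≤ t) :
    ∃ h₀ > (0 : ℝ), ∃ C : ℝ, ∀ h : ℝ, 0 < h → h ≤ h₀ → ‖S h (S t x) - S t x‖ ≤ C * h :=
  stmt16_general S hsg hconv hbdd x hx t ht
end

section
/- Let G be a metric space such that for all x, y ∈ G and λ ∈ (0,1) there exists a point m with d(x,m) = λ d(x,y) and d(m,y) = (1−λ) d(x,y) (a geodesic/convex metric space). Define (S(t)f)(x) := sup_{d(x,y)≤t} f(y) for bounded uniformly continuous f. Then S(s+t)f = S(t)(S(s)f) for all s, t ≥ 0. -/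
/-!
A point `y` with `dist x y ≤ s + t` can be reached in two hops, at most `t` from `x` to an
intermediate point `m` and then at most `s` from `m` to `y`: if neither hop can be trivial,
take `m` at fraction `t / dist x y` of the way from `x` to `y`. This gives
`S(s+t)f ≤ S(t)S(s)f`; conversely, two such hops never lead further than `s + t` from `x`,
by the triangle inequality.
-/

/-- The uncertain shift semigroup on a metric space `G`:
`(S t f) x = sup_{dist x y ≤ t} f y`. -/
noncomputable def MS {G : Type*} [MetricSpace G] (t : ℝ) (f : G → ℝ) (x : G) : ℝ :=
  sSup {z : ℝ | ∃ y : G, dist x y ≤ t ∧ z = f y}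

open Set

section UncertainShift

variable {G : Type*} [MetricSpace G] {f : G → ℝ} {s t c : ℝ} {x y : G}

lemma le_MS (hf : BddAbove (range f)) (h : dist x y ≤ t) : f y ≤ MS t f x :=
  le_csSup (hf.mono (by rintro _ ⟨y, -, rfl⟩; exact mem_range_self y)) ⟨y, h, rfl⟩

lemma MS_le (ht : 0 ≤ t) (h : ∀ y, dist x y ≤ t → f y ≤ c) : MS t f x ≤ c :=
  csSup_le ⟨f x, x, by simpa using ht, rfl⟩ (by rintro _ ⟨y, hy, rfl⟩; exact h y hy)

lemma bddAbove_range_MS (hf : BddAbove (range f)) (hs : 0 ≤ s) :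
    BddAbove (range (MS s f)) := by
  obtain ⟨c, hc⟩ := hf
  exact ⟨c, by rintro _ ⟨x, rfl⟩; exact MS_le hs fun y _ => hc (mem_range_self y)⟩

lemma MS_MS_le_MS_add (hf : BddAbove (range f)) (hs : 0 ≤ s) (ht : 0 ≤ t) :
    MS t (MS s f) x ≤ MS (s + t) f x :=
  MS_le ht fun m hm => MS_le hs fun y hy =>
    le_MS hf (by linarith [dist_triangle x m y])

lemma exists_dist_le_dist_le_of_dist_le_add
    (hgeo : ∀ x y : G, ∀ l : ℝ, 0 < l → l < 1 → ∃ m : G,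
      dist x m = l * dist x y ∧ dist m y = (1 - l) * dist x y)
    (hs : 0 ≤ s) (ht : 0 ≤ t) (h : dist x y ≤ s + t) : ∃ m, dist x m ≤ t ∧ dist m y ≤ s := by
  by_cases hyt : dist x y ≤ t
  · exact ⟨y, hyt, by simpa using hs⟩
  by_cases hys : dist x y ≤ s
  · exact ⟨x, by simpa using ht, hys⟩
  rw [not_le] at hyt hys
  have hd : 0 < dist x y := by linarith
  have ht_pos : 0 < t := by linarith
  obtain ⟨m, hxm, hmy⟩ := hgeo x y (t / dist x y) (by positivity) ((div_lt_one hd).2 hyt)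
  refine ⟨m, ?_, ?_⟩
  · rw [hxm, div_mul_cancel₀ _ hd.ne']
  · rw [hmy, sub_mul, div_mul_cancel₀ _ hd.ne', one_mul]
    linarith

lemma MS_add_le_MS_MS
    (hgeo : ∀ x y : G, ∀ l : ℝ, 0 < l → l < 1 → ∃ m : G,
      dist x m = l * dist x y ∧ dist m y = (1 - l) * dist x y)
    (hf : BddAbove (range f)) (hs : 0 ≤ s) (ht : 0 ≤ t) :
    MS (s + t) f x ≤ MS t (MS s f) x :=
  MS_le (add_nonneg hs ht) fun y hy => by
    obtain ⟨m, hxm, hmy⟩ := exists_dist_le_dist_le_of_dist_le_add hgeo hs ht hy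
    exact (le_MS hf hmy).trans (le_MS (bddAbove_range_MS hf hs) hxm)

end UncertainShift

theorem stmt18_general {G : Type*} [MetricSpace G]
    (hgeo : ∀ x y : G, ∀ l : ℝ, 0 < l → l < 1 → ∃ m : G,
      dist x m = l * dist x y ∧ dist m y = (1 - l) * dist x y)
    (f : G → ℝ) (C : ℝ) (hb : ∀ x, |f x| ≤ C)
    (s t : ℝ) (hs : 0 ≤ s) (ht : 0 ≤ t) (x : G) :
    MS (s + t) f x = MS t (MS s f) x := by
  have hf : BddAbove (range f) := ⟨C, by rintro _ ⟨y, rfl⟩; exact le_of_abs_le (hb y)⟩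
  exact le_antisymm (MS_add_le_MS_MS hgeo hf hs ht) (MS_MS_le_MS_add hf hs ht)

/-- On a metric space with the intermediate-point (geodesic) property, the uncertain shift
semigroup satisfies the semigroup law `S(s+t)f = S(t)(S(s)f)` on bounded uniformly
continuous functions. -/
theorem stmt18 {G : Type*} [MetricSpace G]
    (hgeo : ∀ x y : G, ∀ l : ℝ, 0 < l → l < 1 → ∃ m : G,
      dist x m = l * dist x y ∧ dist m y = (1 - l) * dist x y)
    (f : G → ℝ) (C : ℝ) (hb : ∀ x, |f x| ≤ C) (hu : UniformContinuous f)
    (s t : ℝ) (hs : 0 ≤ s) (ht : 0 ≤ t) (x : G) :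
    MS (s + t) f x = MS t (MS s f) x :=
  stmt18_general hgeo f C hb s t hs ht x
end
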